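/- If u is a smooth solution of the BBM equation, then for any constants ε and α the function obtained by the Galilean-type shift does NOT in general solve the BBM equation: specifically, the vector field t∂_x + ∂_u is not an infinitesimal classical symmetry of the BBM equation, i.e., there exists a solution u of BBM and ε ∈ ℝ such that v(x,t) = u(x - εt, t) + ε is not a solution of BBM. -/

import Mathlib

/-- Left-hand side of the BBM equation `u_t + u_x + u*u_x - u_xxt` at `(x, t)`. -/
noncomputable def bbmLHS (u : ℝ → ℝ → ℝ) (x t : ℝ) : ℝ :=
  deriv (fun s => u x s) t + deriv (fun y => u y t) x
    + u x t * deriv (fun y => u y t) x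
    - deriv (fun s => deriv (fun y => deriv (fun z => u z s) y) x) t

/-- `u` solves the BBM equation everywhere. -/
def IsBBMSolution (u : ℝ → ℝ → ℝ) : Prop := ∀ x t : ℝ, bbmLHS u x t = 0

open Real

noncomputable def F (ξ : ℝ) : ℝ := -4 / cosh ξ ^ 2
noncomputable def F1 (ξ : ℝ) : ℝ := 8 * sinh ξ / cosh ξ ^ 3
noncomputable def F2 (ξ : ℝ) : ℝ := (8 * cosh ξ ^ 2 - 24 * sinh ξ ^ 2) / cosh ξ ^ 4
noncomputable def F3 (ξ : ℝ) : ℝ := (-64 * sinh ξ * cosh ξ ^ 2 + 96 * sinh ξ ^ 3) / cosh ξ ^ 5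

lemma coshne (ξ : ℝ) : cosh ξ ≠ 0 := (Real.cosh_pos ξ).ne'

lemma hF1 (ξ : ℝ) : HasDerivAt F (F1 ξ) ξ := by
  have h := (hasDerivAt_const ξ (-4 : ℝ)).div ((Real.hasDerivAt_cosh ξ).pow 2)
    (pow_ne_zero 2 (coshne ξ))
  refine h.congr_deriv ?_
  have := coshne ξ
  simp only [F1, Pi.pow_apply, Pi.sub_apply]
  field_simp
  ring

lemma hF2 (ξ : ℝ) : HasDerivAt F1 (F2 ξ) ξ := by
  have h := ((Real.hasDerivAt_sinh ξ).const_mul 8).div ((Real.hasDerivAt_cosh ξ).pow 3)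
    (pow_ne_zero 3 (coshne ξ))
  refine h.congr_deriv ?_
  have := coshne ξ
  simp only [F2, Pi.pow_apply, Pi.sub_apply]
  field_simp
  ring

lemma hF3 (ξ : ℝ) : HasDerivAt F2 (F3 ξ) ξ := by
  have h := ((((Real.hasDerivAt_cosh ξ).pow 2).const_mul 8).sub
      (((Real.hasDerivAt_sinh ξ).pow 2).const_mul 24)).div
    ((Real.hasDerivAt_cosh ξ).pow 4) (pow_ne_zero 4 (coshne ξ))
  refine h.congr_deriv ?_
  have := coshne ξ
  simp only [F3, Pi.pow_apply, Pi.sub_apply]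
  field_simp
  ring

lemma key (ξ : ℝ) : 4/3 * F1 ξ + F ξ * F1 ξ - 1/3 * F3 ξ = 0 := by
  have h := Real.cosh_sq ξ
  have hc := coshne ξ
  unfold F F1 F3
  field_simp
  linear_combination (96 * sinh ξ) * h

lemma F3ne : F3 (arsinh 1) ≠ 0 := by
  unfold F3
  rw [Real.sinh_arsinh, Real.cosh_arsinh]
  have h2 : Real.sqrt (1 + 1 ^ 2) ^ 2 = 2 := by
    rw [Real.sq_sqrt] <;> norm_num
  have hpos : (0:ℝ) < Real.sqrt (1 + 1 ^ 2) := Real.sqrt_pos.2 (by norm_num)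
  apply div_ne_zero
  · nlinarith
  · positivity

theorem stmt_15 :
    ∃ (u : ℝ → ℝ → ℝ) (ε : ℝ),
      ContDiff ℝ (⊤ : ℕ∞) (fun p : ℝ × ℝ => u p.1 p.2) ∧ IsBBMSolution u ∧
        ¬ IsBBMSolution (fun x t => u (x - ε * t) t + ε) := by
  refine ⟨fun x t => F (x + t/3), 1, ?_, ?_, ?_⟩
  · -- smoothness
    have hc : ContDiff ℝ (⊤ : ℕ∞) (fun p : ℝ × ℝ => Real.cosh (p.1 + p.2/3) ^ 2) :=
      (Real.contDiff_cosh.comp ((contDiff_fst).add ((contDiff_snd).div_const 3))).pow 2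
    exact ContDiff.div contDiff_const hc (fun p => pow_ne_zero 2 (coshne _))
  · -- solution
    intro x t
    have hx3 : ∀ (t x : ℝ), HasDerivAt (fun s : ℝ => x + s/3) (1/3) t := by
      intro t x
      simpa using ((hasDerivAt_id t).div_const 3).const_add x
    have hxi : ∀ (x t : ℝ), HasDerivAt (fun y : ℝ => y + t/3) 1 x := by
      intro x t
      exact (hasDerivAt_id x).add_const _
    have hdt : deriv (fun s => F (x + s/3)) t = F1 (x + t/3) * (1/3) := by
      simpa [Function.comp_def] using ((hF1 (x + t/3)).comp t (hx3 t x)).deriv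
    have hdx : deriv (fun y => F (y + t/3)) x = F1 (x + t/3) := by
      simpa [Function.comp_def] using ((hF1 (x + t/3)).comp x (hxi x t)).deriv
    have hmix : deriv (fun s => deriv (fun y => deriv (fun z => F (z + s/3)) y) x) t
        = F3 (x + t/3) * (1/3) := by
      have e : (fun s => deriv (fun y => deriv (fun z => F (z + s/3)) y) x)
          = fun s => F2 (x + s/3) := by
        funext s
        have e2 : (fun y => deriv (fun z => F (z + s/3)) y) = fun y => F1 (y + s/3) := by
          funext y
          simpa [Function.comp_def] using ((hF1 (y + s/3)).comp y (hxi y s)).deriv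
        rw [e2]
        simpa [Function.comp_def] using ((hF2 (x + s/3)).comp x (hxi x s)).deriv
      rw [e]
      simpa [Function.comp_def] using ((hF3 (x + t/3)).comp t (hx3 t x)).deriv
    show deriv (fun s => F (x + s/3)) t + deriv (fun y => F (y + t/3)) x
      + F (x + t/3) * deriv (fun y => F (y + t/3)) x
      - deriv (fun s => deriv (fun y => deriv (fun z => F (z + s/3)) y) x) t = 0
    rw [hdt, hdx, hmix]
    linear_combination key (x + t/3)
  · -- not a solution after the shift
    intro h
    have hval := h (arsinh 1) 0
    set x := arsinh 1 with hx
    have hvt : ∀ (t x : ℝ), HasDerivAt (fun s : ℝ => x - 1*s + s/3) (-(2/3)) t := by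
      intro t x
      have h1 : HasDerivAt (fun s : ℝ => x - 1*s) (-1 : ℝ) t := by
        simpa using ((hasDerivAt_id t).const_mul 1).const_sub x
      have := h1.add ((hasDerivAt_id t).div_const 3)
      refine this.congr_deriv ?_
      norm_num
    have hvx : ∀ (x t : ℝ), HasDerivAt (fun y : ℝ => y - 1*t + t/3) 1 x := by
      intro x t
      exact ((hasDerivAt_id x).sub_const _).add_const _
    have hdt : deriv (fun s => F (x - 1*s + s/3) + 1) 0 = F1 (x - 1*0 + 0/3) * (-(2/3)) := by
      simpa [Function.comp_def] using
        (((hF1 (x - 1*0 + 0/3)).comp 0 (hvt 0 x)).add_const 1).deriv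
    have hdx : deriv (fun y => F (y - 1*0 + 0/3) + 1) x = F1 (x - 1*0 + 0/3) := by
      simpa [Function.comp_def] using
        (((hF1 (x - 1*0 + 0/3)).comp x (hvx x 0)).add_const 1).deriv
    have hmix : deriv (fun s => deriv (fun y => deriv (fun z => F (z - 1*s + s/3) + 1) y) x) 0
        = F3 (x - 1*0 + 0/3) * (-(2/3)) := by
      have e : (fun s => deriv (fun y => deriv (fun z => F (z - 1*s + s/3) + 1) y) x)
          = fun s => F2 (x - 1*s + s/3) := by
        funext s
        have e2 : (fun y => deriv (fun z => F (z - 1*s + s/3) + 1) y)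
            = fun y => F1 (y - 1*s + s/3) := by
          funext y
          simpa [Function.comp_def] using
            (((hF1 (y - 1*s + s/3)).comp y (hvx y s)).add_const 1).deriv
        rw [e2]
        simpa [Function.comp_def] using ((hF2 (x - 1*s + s/3)).comp x (hvx x s)).deriv
      rw [e]
      simpa [Function.comp_def] using ((hF3 (x - 1*0 + 0/3)).comp 0 (hvt 0 x)).deriv
    have hexpand : bbmLHS (fun x t => F (x - 1*t + t/3) + 1) x 0
        = deriv (fun s => F (x - 1*s + s/3) + 1) 0 + deriv (fun y => F (y - 1*0 + 0/3) + 1) x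
          + (F (x - 1*0 + 0/3) + 1) * deriv (fun y => F (y - 1*0 + 0/3) + 1) x
          - deriv (fun s => deriv (fun y => deriv (fun z => F (z - 1*s + s/3) + 1) y) x) 0 := rfl
    have hval' : bbmLHS (fun x t => F (x - 1*t + t/3) + 1) x 0 = 0 := hval
    rw [hexpand, hdt, hdx, hmix] at hval'
    have hxe : x - 1*0 + 0/3 = x := by ring
    rw [hxe] at hval'
    have : F3 x = 0 := by linear_combination hval' - key x
    exact F3ne this
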